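/- Let Γ be a torsion inner ultrahomogeneous group into which every finite group embeds. Then Γ is uniformly simple: every element of Γ is a product of at most 4 conjugates of any given nonidentity element. -/

import Mathlib

def InnerUltrahomogeneous (G : Type*) [Group G] : Prop :=
  ∀ (A B : Subgroup G), A.FG → B.FG → ∀ e : A ≃* B,
    ∃ g : G, ∀ a : A, g⁻¹ * (a : G) * g = ((e a : B) : G)

/-!
Elements of equal order generate isomorphic cyclic subgroups, so inner ultrahomogeneity makes them
conjugate. Given `a ≠ 1` of order `n ≥ 2` and any `b` of order `m`, it therefore suffices to find a
finite group with two elements of order `n` whose product has order `m`: embedding it and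
conjugating turns the product into `b` and each factor into a conjugate of `a`, so two conjugates
already suffice. In the wreath product `C_m ≀ C_n`, let `q` generate the top group and let `w` be
the base element supported at `1` with value a generator of `C_m`. Then `w q w⁻¹` and `q⁻¹` have
order `n`, and their product `⁅w, q⁆` is a base element with entries `1` and `-1`, of order `m`.
-/

open scoped commutatorElement

namespace RegularWreathProduct

section

variable {D Q : Type*} [Group D] [Group Q]

def base : (Q → D) →* D ≀ᵣ Q where
  toFun v := ⟨v, 1⟩
  map_one' := rfl
  map_mul' _ _ := by ext <;> simp

theorem base_injective : Function.Injective (base : (Q → D) → D ≀ᵣ Q) :=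
  fun _ _ h => congrArg left h

theorem inl_injective : Function.Injective (inl : Q → D ≀ᵣ Q) :=
  Function.LeftInverse.injective (g := rightHom) fun_id

theorem commutatorElement_base_inl (v : Q → D) (q : Q) :
    ⁅(base v : D ≀ᵣ Q), inl q⁆ = base (v * fun x => (v (q⁻¹ * x))⁻¹) := by
  ext x <;> simp [commutatorElement_def, base, mul_def]

end

section

variable {D Q : Type*} [CommGroup D] [Group Q] [DecidableEq Q]

theorem orderOf_commutatorElement_base_mulSingle_inl {q : Q} (hq : q ≠ 1) (d : D) :
    orderOf ⁅(base (Pi.mulSingle 1 d) : D ≀ᵣ Q), (inl q : D ≀ᵣ Q)⁆ = orderOf d := by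
  rw [commutatorElement_base_inl, orderOf_injective _ base_injective]
  set v : Q → D := Pi.mulSingle 1 d
  set u : Q → D := v * fun x => (v (q⁻¹ * x))⁻¹
  refine Nat.dvd_antisymm (orderOf_dvd_of_pow_eq_one ?_) ?_
  · funext x
    simp [u, v, mul_pow, inv_pow, Pi.mulSingle_apply]
  · simpa [u, v, hq] using orderOf_map_dvd (Pi.evalMonoidHom (fun _ : Q => D) 1) u

end

end RegularWreathProduct

open Subgroup

theorem Subgroup.fg_zpowers {G : Type*} [Group G] (g : G) : (zpowers g).FG :=
  ⟨{g}, by simp [zpowers_eq_closure]⟩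

theorem Subgroup.mem_zpowers_generator {G : Type*} [Group G] (g : G) (a : zpowers g) :
    a ∈ zpowers (⟨g, mem_zpowers g⟩ : zpowers g) := by
  obtain ⟨_, k, rfl⟩ := a
  exact ⟨k, Subtype.ext (by simp)⟩

theorem InnerUltrahomogeneous.exists_conj_of_orderOf_eq {Γ : Type*} [Group Γ]
    (h : InnerUltrahomogeneous Γ) {x y : Γ} (hxy : orderOf x = orderOf y) :
    ∃ c : Γ, c⁻¹ * x * c = y := by
  obtain ⟨c, hc⟩ := h (zpowers x) (zpowers y) (fg_zpowers x) (fg_zpowers y)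
    (mulEquivOfOrderOfEq (mem_zpowers_generator x) (mem_zpowers_generator y) (by simpa using hxy))
  exact ⟨c, by simpa using hc ⟨x, mem_zpowers x⟩⟩

theorem exists_orderOf_eq_orderOf_eq_orderOf_mul_eq {n m : ℕ} (hn : 2 ≤ n) (hm : m ≠ 0) :
    ∃ (G : Type) (_ : Group G) (_ : Finite G) (x y : G),
      orderOf x = n ∧ orderOf y = n ∧ orderOf (x * y) = m := by
  have : NeZero n := ⟨by omega⟩
  have : NeZero m := ⟨hm⟩
  set q := Multiplicative.ofAdd (1 : ZMod n)
  have hq : orderOf q = n := by rw [orderOf_ofAdd_eq_addOrderOf, ZMod.addOrderOf_one]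
  have hq1 : q ≠ 1 := fun h1 => by rw [h1, orderOf_one] at hq; omega
  let w : Multiplicative (ZMod m) ≀ᵣ Multiplicative (ZMod n) :=
    RegularWreathProduct.base (Pi.mulSingle 1 (Multiplicative.ofAdd 1))
  let x : Multiplicative (ZMod m) ≀ᵣ Multiplicative (ZMod n) := RegularWreathProduct.inl q
  have hx : orderOf x = n := by rw [orderOf_injective _ RegularWreathProduct.inl_injective, hq]
  refine ⟨_, inferInstance, inferInstance, w * x * w⁻¹, x⁻¹, ?_, ?_, ?_⟩
  · rw [← (SemiconjBy.conj_mk w x).orderOf_eq w, hx]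
  · rw [orderOf_inv, hx]
  · rw [← commutatorElement_def,
      RegularWreathProduct.orderOf_commutatorElement_base_mulSingle_inl hq1,
      orderOf_ofAdd_eq_addOrderOf, ZMod.addOrderOf_one]

theorem uniformly_simple_of_torsion_universal
    {Γ : Type*} [Group Γ] (h : InnerUltrahomogeneous Γ)
    (htor : ∀ g : Γ, IsOfFinOrder g)
    (huniv : ∀ (H : Type) [Group H] [Finite H], ∃ f : H →* Γ, Function.Injective f) :
    ∀ a b : Γ, a ≠ 1 →
      ∃ l : List Γ, l.length ≤ 4 ∧
        (∀ x ∈ l, ∃ c : Γ, x = c⁻¹ * a * c) ∧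
        l.prod = b := by
  intro a b ha
  have hn : 2 ≤ orderOf a := by
    have := (htor a).orderOf_pos
    have := mt orderOf_eq_one_iff.mp ha
    omega
  obtain ⟨G, _, _, x, y, hx, hy, hxy⟩ :=
    exists_orderOf_eq_orderOf_eq_orderOf_mul_eq hn (htor b).orderOf_pos.ne'
  obtain ⟨f, hf⟩ := huniv G
  obtain ⟨c, hc⟩ := h.exists_conj_of_orderOf_eq (x := f (x * y)) (y := b)
    (by rw [orderOf_injective f hf, hxy])
  let φ : G →* Γ := (MulAut.conj c⁻¹).toMonoidHom.comp f
  have hφ : Function.Injective φ := (MulAut.conj c⁻¹).injective.comp hf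
  have conj_of_orderOf (z : G) (hz : orderOf z = orderOf a) : ∃ d : Γ, φ z = d⁻¹ * a * d :=
    (h.exists_conj_of_orderOf_eq (by rw [orderOf_injective φ hφ, hz])).imp fun _ hd => hd.symm
  refine ⟨[φ x, φ y], by simp, ?_, ?_⟩
  · simpa using ⟨conj_of_orderOf x hx, conj_of_orderOf y hy⟩
  · rw [List.prod_cons, List.prod_singleton, ← map_mul, ← hc]
    simp [φ]
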